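/- (Courant nodal domain theorem for positivity preserving forms) Let Q be a positivity preserving form with compact resolvent and eigenvalues λ₁ ≤ λ₂ ≤ ... counted with multiplicity. Let f be an eigenfunction for λₙ with multiplicity k, and suppose f± ∈ D(Q^𝒜_{F±}) for a nest 𝒜. Then f has at most n + k − 1 (Q,𝒜)-nodal domains. -/

import Mathlib

open MeasureTheory Filter Topology RealInnerProductSpace

noncomputable section

variable {X : Type*} [MeasurableSpace X]

open scoped Classical in
/-- Multiplication by the indicator function of a set `A`, as a map on `L²`. -/
def indMul {μ : Measure X} (A : Set X) (f : Lp ℝ 2 μ) : Lp ℝ 2 μ :=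
  if h : MeasurableSet A then ((Lp.memLp f).indicator h).toLp else 0

/-- A closed (nonnegative, symmetric) quadratic form in the wide sense on `L²(X,m)`:
its domain is a not necessarily dense subspace which is complete in the form norm. -/
structure WideForm (μ : Measure X) where
  dom : Submodule ℝ (Lp ℝ 2 μ)
  Q : Lp ℝ 2 μ → Lp ℝ 2 μ → ℝ
  symm : ∀ u v, Q u v = Q v u
  add_left : ∀ u v w, Q (u + v) w = Q u w + Q v w
  smul_left : ∀ (c : ℝ) u v, Q (c • u) v = c * Q u v
  nonneg : ∀ u, 0 ≤ Q u u
  closed : ∀ f : ℕ → Lp ℝ 2 μ, (∀ n, f n ∈ dom) →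
    (∀ ε > 0, ∃ N, ∀ m ≥ N, ∀ n ≥ N,
      Q (f m - f n) (f m - f n) + ‖f m - f n‖ ^ 2 < ε) →
    ∃ g ∈ dom, Tendsto (fun n => Q (f n - g) (f n - g) + ‖f n - g‖ ^ 2) atTop (nhds 0)

/-- `G` is the resolvent family of the closed form `T`. -/
def WideForm.IsResolvent {μ : Measure X} (T : WideForm μ)
    (G : ℝ → Lp ℝ 2 μ →L[ℝ] Lp ℝ 2 μ) : Prop :=
  ∀ α > 0, ∀ u, G α u ∈ T.dom ∧
    ∀ v ∈ T.dom, T.Q (G α u) v + α * ⟪G α u, v⟫ = ⟪u, v⟫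

/-- `T` is positivity preserving. -/
def WideForm.PosPres {μ : Measure X} (T : WideForm μ) : Prop :=
  ∀ u ∈ T.dom, |u| ∈ T.dom ∧ T.Q |u| |u| ≤ T.Q u u

/-- The domain of the restriction of `T` to `B` with respect to the nest `𝒜`:
the form-norm closure of the union of the domains of the restrictions to `B ∩ 𝒜 n`. -/
def NestDom {μ : Measure X} (T : WideForm μ) (𝒜 : ℕ → Set X) (B : Set X) :
    Set (Lp ℝ 2 μ) :=
  {f | f ∈ T.dom ∧ ∃ g : ℕ → Lp ℝ 2 μ,
    (∀ k, g k ∈ T.dom ∧ ∃ n, indMul (B ∩ 𝒜 n) (g k) = g k) ∧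
    Tendsto (fun k => T.Q (g k - f) (g k - f) + ‖g k - f‖ ^ 2) atTop (nhds 0)}

/-- `C` is invariant for the restriction `Q^𝒜_B` (form characterization, valid for
positivity preserving forms). -/
def NestInvariant {μ : Measure X} (T : WideForm μ) (𝒜 : ℕ → Set X) (B C : Set X) : Prop :=
  MeasurableSet C ∧ ∀ f ∈ NestDom T 𝒜 B, indMul C f ∈ NestDom T 𝒜 B ∧
    T.Q f f = T.Q (indMul C f) (indMul C f) + T.Q (f - indMul C f) (f - indMul C f)

/-- `C` is a connected component of the restriction `Q^𝒜_B`: an invariant set of positive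
measure whose restriction is irreducible. -/
def NestComponent {μ : Measure X} (T : WideForm μ) (𝒜 : ℕ → Set X) (B C : Set X) : Prop :=
  NestInvariant T 𝒜 B C ∧ 0 < μ C ∧
    ∀ D : Set X, MeasurableSet D → D ⊆ C →
      (∀ f ∈ NestDom T 𝒜 B, indMul C f = f →
        (indMul D f ∈ NestDom T 𝒜 B ∧
          T.Q f f = T.Q (indMul D f) (indMul D f)
            + T.Q (f - indMul D f) (f - indMul D f))) →
      μ D = 0 ∨ μ (C \ D) = 0

/-!
Write `g_i = f·1_{C_i}`. Invariance of the nodal domains together with positivity preservation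
gives `Q(g_i, g_j) ≥ 0` for `i ≠ j`, and also `Q(g_i, r) ≥ 0` for the remainder
`r = f·1_{(⋃ C_j)ᶜ}`, so that `∑_j Q(g_i, g_j) ≤ Q(g_i, f) = λₙ ‖g_i‖²`. Because the off-diagonal
entries are nonnegative, these row bounds give `Q(v) ≤ λₙ ‖v‖²` for every `v = ∑ a_i g_i`. With
more than `n + k - 1` nodal domains some nonzero such `v` is orthogonal to the first `n + k - 1`
eigenfunctions, whence `Q(v) ≥ λ_{n+k} ‖v‖² > λₙ ‖v‖²`.
-/

lemma sum_mul_mul_le_of_nonneg_off_diag {ι : Type*} [Fintype ι] {M : ι → ι → ℝ}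
    (hM : ∀ i j, M i j = M j i) (hoff : Pairwise fun i j => 0 ≤ M i j) (a : ι → ℝ) :
    ∑ i, ∑ j, a i * a j * M i j ≤ ∑ i, a i ^ 2 * ∑ j, M i j := by
  have hterm : ∀ i j, a i * a j * M i j ≤ (a i ^ 2 / 2 + a j ^ 2 / 2) * M i j := by
    intro i j
    rcases eq_or_ne i j with rfl | hij
    · exact le_of_eq (by ring)
    · nlinarith [hoff hij, sq_nonneg (a i - a j)]
  calc ∑ i, ∑ j, a i * a j * M i j ≤ ∑ i, ∑ j, (a i ^ 2 / 2 + a j ^ 2 / 2) * M i j :=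
        Finset.sum_le_sum fun i _ => Finset.sum_le_sum fun j _ => hterm i j
    _ = ∑ i, ∑ j, a i ^ 2 / 2 * M i j + ∑ i, ∑ j, a i ^ 2 / 2 * M i j := by
        simp only [add_mul, Finset.sum_add_distrib]
        rw [Finset.sum_comm (f := fun i j => a j ^ 2 / 2 * M i j)]
        exact congrArg _ (Finset.sum_congr rfl fun i _ =>
          Finset.sum_congr rfl fun j _ => by rw [hM])
    _ = ∑ i, a i ^ 2 * ∑ j, M i j := by
        rw [← Finset.sum_add_distrib]
        refine Finset.sum_congr rfl fun i _ => ?_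
        rw [← Finset.sum_add_distrib, Finset.mul_sum]
        exact Finset.sum_congr rfl fun j _ => by ring

section InnerProductSpace

variable {E : Type*} [NormedAddCommGroup E] [InnerProductSpace ℝ E]

lemma norm_sum_smul_sq_of_pairwise_inner_eq_zero {ι : Type*} [Fintype ι] {g : ι → E}
    (hg : Pairwise fun i j => ⟪g i, g j⟫ = 0) (a : ι → ℝ) :
    ‖∑ i, a i • g i‖ ^ 2 = ∑ i, a i ^ 2 * ‖g i‖ ^ 2 := by
  classical
  rw [← real_inner_self_eq_norm_sq, sum_inner]
  refine Finset.sum_congr rfl fun i _ => ?_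
  rw [inner_sum, Finset.sum_eq_single i
      (fun j _ hji => by rw [real_inner_smul_left, real_inner_smul_right, hg hji.symm]; ring)
      (by simp),
    real_inner_smul_left, real_inner_smul_right, real_inner_self_eq_norm_sq]
  ring

lemma exists_ne_zero_forall_inner_sum_smul_eq_zero {ι κ : Type*} [Fintype ι] [Fintype κ]
    (hκι : Fintype.card κ < Fintype.card ι) (g : ι → E) (w : κ → E) :
    ∃ a : ι → ℝ, a ≠ 0 ∧ ∀ j, ⟪∑ i, a i • g i, w j⟫ = 0 := by
  let L : (ι → ℝ) →ₗ[ℝ] κ → ℝ :=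
    LinearMap.pi fun j => (innerₗ E (w j)).comp (Fintype.linearCombination ℝ g)
  obtain ⟨a, ha, ha0⟩ := (Submodule.ne_bot_iff _).mp
    (LinearMap.ker_ne_bot_of_finrank_lt (f := L) (by simpa using hκι))
  refine ⟨a, ha0, fun j => ?_⟩
  rw [real_inner_comm]
  simpa [L, Fintype.linearCombination_apply, inner_sum, real_inner_smul_right] using
    congrFun (LinearMap.mem_ker.mp ha) j

end InnerProductSpace

section IndMul

variable {μ : Measure X}

lemma coeFn_indMul {A : Set X} (hA : MeasurableSet A) (f : Lp ℝ 2 μ) :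
    ⇑(indMul A f) =ᵐ[μ] A.indicator f := by
  rw [indMul, dif_pos hA]
  exact MemLp.coeFn_toLp _

lemma indMul_of_not_measurableSet {A : Set X} (hA : ¬ MeasurableSet A) (f : Lp ℝ 2 μ) :
    indMul A f = 0 :=
  dif_neg hA

lemma indMul_add (A : Set X) (f g : Lp ℝ 2 μ) :
    indMul A (f + g) = indMul A f + indMul A g := by
  by_cases hA : MeasurableSet A
  · refine Lp.ext ?_
    filter_upwards [coeFn_indMul hA (f + g), (Lp.coeFn_add f g).indicator (s := A),
      coeFn_indMul hA f, coeFn_indMul hA g, Lp.coeFn_add (indMul A f) (indMul A g)]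
      with x h h' hf hg hfg
    rw [h, h', hfg, Pi.add_apply, hf, hg, Set.indicator_add', Pi.add_apply]
  · simp [indMul_of_not_measurableSet hA]

def indMulAddHom (A : Set X) : Lp ℝ 2 μ →+ Lp ℝ 2 μ :=
  AddMonoidHom.mk' (indMul A) (indMul_add A)

lemma indMul_sub (A : Set X) (f g : Lp ℝ 2 μ) :
    indMul A (f - g) = indMul A f - indMul A g :=
  (indMulAddHom A).map_sub f g

lemma indMul_neg (A : Set X) (f : Lp ℝ 2 μ) : indMul A (-f) = -indMul A f :=
  (indMulAddHom A).map_neg f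

lemma indMul_zero (A : Set X) : indMul A (0 : Lp ℝ 2 μ) = 0 :=
  (indMulAddHom A).map_zero

lemma indMul_indMul {A B : Set X} (hA : MeasurableSet A) (hB : MeasurableSet B)
    (f : Lp ℝ 2 μ) : indMul A (indMul B f) = indMul (A ∩ B) f := by
  refine Lp.ext ?_
  filter_upwards [coeFn_indMul hA (indMul B f), (coeFn_indMul hB f).indicator (s := A),
    coeFn_indMul (hA.inter hB) f] with x h h' h''
  rw [h, h', h'', Set.indicator_indicator]

lemma indMul_of_measure_zero {A : Set X} (hA : μ A = 0) (f : Lp ℝ 2 μ) : indMul A f = 0 := by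
  by_cases hAm : MeasurableSet A
  · refine Lp.ext ?_
    filter_upwards [coeFn_indMul hAm f, indicator_meas_zero hA (f := ⇑f), Lp.coeFn_zero ℝ 2 μ]
      with x h h' h0
    rw [h, h', h0]
  · exact indMul_of_not_measurableSet hAm f

lemma indMul_union {A B : Set X} (hA : MeasurableSet A) (hB : MeasurableSet B)
    (hAB : μ (A ∩ B) = 0) (f : Lp ℝ 2 μ) :
    indMul (A ∪ B) f = indMul A f + indMul B f := by
  refine Lp.ext ?_
  filter_upwards [coeFn_indMul (hA.union hB) f, coeFn_indMul hA f, coeFn_indMul hB f,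
    Lp.coeFn_add (indMul A f) (indMul B f),
    indicator_union_eventuallyEq (f := ⇑f) (measure_eq_zero_iff_ae_notMem.mp hAB)]
    with x h hA' hB' hAB' hU
  rw [h, hAB', Pi.add_apply, hA', hB', hU, Pi.add_apply]

lemma sum_indMul_eq_indMul_iUnion {ι : Type*} [Fintype ι] {C : ι → Set X}
    (hC : ∀ i, MeasurableSet (C i)) (hdisj : Pairwise fun i j => μ (C i ∩ C j) = 0)
    (f : Lp ℝ 2 μ) : ∑ i, indMul (C i) f = indMul (⋃ i, C i) f := by
  classical
  suffices ∀ s : Finset ι, ∑ i ∈ s, indMul (C i) f = indMul (⋃ i ∈ s, C i) f by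
    simpa using this Finset.univ
  intro s
  induction s using Finset.induction_on with
  | empty => simp [indMul_of_measure_zero]
  | insert a s ha ih =>
    have hnull : μ (C a ∩ ⋃ i ∈ s, C i) = 0 := by
      rw [Set.inter_iUnion₂]
      exact (measure_biUnion_null_iff s.countable_toSet).mpr
        fun i hi => hdisj (ne_of_mem_of_not_mem hi ha).symm
    rw [Finset.sum_insert ha, ih, Finset.set_biUnion_insert,
      indMul_union (hC a) (s.measurableSet_biUnion fun i _ => hC i) hnull]

lemma indMul_univ (f : Lp ℝ 2 μ) : indMul Set.univ f = f := by
  refine Lp.ext ?_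
  filter_upwards [coeFn_indMul MeasurableSet.univ f] with x h
  rw [h, Set.indicator_univ]

lemma indMul_compl {A : Set X} (hA : MeasurableSet A) (f : Lp ℝ 2 μ) :
    indMul Aᶜ f = f - indMul A f := by
  rw [eq_sub_iff_add_eq', ← indMul_union hA hA.compl (by simp), Set.union_compl_self,
    indMul_univ]

lemma indMul_nonneg (A : Set X) {f : Lp ℝ 2 μ} (hf : 0 ≤ f) : 0 ≤ indMul A f := by
  by_cases hA : MeasurableSet A
  · rw [← Lp.coeFn_nonneg] at hf ⊢
    filter_upwards [coeFn_indMul hA f, hf] with x h hx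
    rw [h]
    exact Set.indicator_nonneg (fun _ _ => hx) x
  · rw [indMul_of_not_measurableSet hA]

lemma indMul_le_self (A : Set X) {f : Lp ℝ 2 μ} (hf : 0 ≤ f) : indMul A f ≤ f := by
  by_cases hA : MeasurableSet A
  · rw [← Lp.coeFn_nonneg] at hf
    rw [← Lp.coeFn_le]
    filter_upwards [coeFn_indMul hA f, hf] with x h hx
    rw [h]
    exact Set.indicator_le_self' (fun _ _ => hx) x
  · rwa [indMul_of_not_measurableSet hA]

lemma inner_indMul_left {A : Set X} (hA : MeasurableSet A) (f g : Lp ℝ 2 μ) :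
    ⟪indMul A f, g⟫ = ⟪f, indMul A g⟫ := by
  rw [L2.inner_def, L2.inner_def]
  refine integral_congr_ae ?_
  filter_upwards [coeFn_indMul hA f, coeFn_indMul hA g] with x hf hg
  rw [hf, hg]
  by_cases hx : x ∈ A <;> simp [hx]

lemma inner_indMul_eq_zero {A A' : Set X} (hA : MeasurableSet A) (hA' : MeasurableSet A')
    (hAA' : μ (A ∩ A') = 0) (f g : Lp ℝ 2 μ) : ⟪indMul A f, indMul A' g⟫ = 0 := by
  rw [inner_indMul_left hA, indMul_indMul hA hA', indMul_of_measure_zero hAA', inner_zero_right]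

lemma inner_indMul_self {A : Set X} (hA : MeasurableSet A) (f : Lp ℝ 2 μ) :
    ⟪indMul A f, f⟫ = ‖indMul A f‖ ^ 2 := by
  rw [← real_inner_self_eq_norm_sq, inner_indMul_left hA f (indMul A f), indMul_indMul hA hA,
    Set.inter_self, real_inner_comm]

lemma coeFn_posPart_eq_max (f : Lp ℝ 2 μ) : ⇑f⁺ =ᵐ[μ] fun x => max (f x) 0 := by
  filter_upwards [Lp.coeFn_sup f 0, Lp.coeFn_zero ℝ 2 μ] with x h h0
  rw [posPart_def, h, Pi.sup_apply, h0, Pi.zero_apply]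

lemma indMul_posPart_eq_zero {A : Set X} {f : Lp ℝ 2 μ} (hf : ∀ᵐ x ∂μ, x ∈ A → f x ≤ 0) :
    indMul A f⁺ = 0 := by
  by_cases hA : MeasurableSet A
  · refine Lp.ext ?_
    filter_upwards [coeFn_indMul hA f⁺, coeFn_posPart_eq_max f, Lp.coeFn_zero ℝ 2 μ, hf]
      with x h hp h0 hx
    rw [h, h0, Pi.zero_apply]
    by_cases hxA : x ∈ A
    · rw [Set.indicator_of_mem hxA, hp, max_eq_right (hx hxA)]
    · exact Set.indicator_of_notMem hxA _
  · exact indMul_of_not_measurableSet hA _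

lemma indMul_negPart_eq_zero {A : Set X} {f : Lp ℝ 2 μ} (hf : ∀ᵐ x ∂μ, x ∈ A → 0 ≤ f x) :
    indMul A f⁻ = 0 := by
  rw [← posPart_neg]
  refine indMul_posPart_eq_zero ?_
  filter_upwards [hf, Lp.coeFn_neg f] with x hx hn hxA
  rw [hn, Pi.neg_apply, neg_nonpos]
  exact hx hxA

lemma indMul_eq_indMul_posPart {A : Set X} {f : Lp ℝ 2 μ} (hf : ∀ᵐ x ∂μ, x ∈ A → 0 ≤ f x) :
    indMul A f = indMul A f⁺ := by
  conv_lhs => rw [← posPart_sub_negPart f]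
  rw [indMul_sub, indMul_negPart_eq_zero hf, sub_zero]

lemma indMul_neg_eq_indMul_negPart {A : Set X} {f : Lp ℝ 2 μ}
    (hf : ∀ᵐ x ∂μ, x ∈ A → f x ≤ 0) : indMul A (-f) = indMul A f⁻ := by
  conv_lhs => rw [← posPart_sub_negPart f]
  rw [neg_sub, indMul_sub, indMul_posPart_eq_zero hf, sub_zero]

lemma indMul_ne_zero {A : Set X} (hA : MeasurableSet A) (hμA : 0 < μ A) {f : Lp ℝ 2 μ}
    (hf : ∀ᵐ x ∂μ, x ∈ A → f x ≠ 0) : indMul A f ≠ 0 := by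
  intro h0
  have hA0 : ∀ᵐ x ∂μ, x ∉ A := by
    filter_upwards [h0 ▸ coeFn_indMul hA f, Lp.coeFn_zero ℝ 2 μ, hf] with x h h0 hx hxA
    rw [h0, Set.indicator_of_mem hxA] at h
    exact hx hxA h.symm
  exact hμA.ne' (measure_eq_zero_iff_ae_notMem.mpr hA0)

lemma indMul_eq_self_of_subset {A A' : Set X} (hA' : MeasurableSet A') (hAA' : A ⊆ A')
    {f : Lp ℝ 2 μ} (hf : indMul A f = f) : indMul A' f = f := by
  by_cases hA : MeasurableSet A
  · rw [← hf, indMul_indMul hA' hA, Set.inter_eq_right.mpr hAA']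
  · rw [← hf, indMul_of_not_measurableSet hA, indMul_zero]

end IndMul

namespace WideForm

variable {μ : Measure X} (T : WideForm μ)

def bilin : LinearMap.BilinForm ℝ (Lp ℝ 2 μ) :=
  LinearMap.mk₂ ℝ T.Q T.add_left T.smul_left
    (fun u v w => by rw [T.symm, T.add_left, T.symm v, T.symm w])
    (fun c u v => by rw [T.symm, T.smul_left, T.symm, smul_eq_mul])

lemma bilin_apply (u v : Lp ℝ 2 μ) : T.bilin u v = T.Q u v := rfl

lemma add_right (u v w : Lp ℝ 2 μ) : T.Q u (v + w) = T.Q u v + T.Q u w :=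
  (T.bilin u).map_add v w

lemma sub_left (u v w : Lp ℝ 2 μ) : T.Q (u - v) w = T.Q u w - T.Q v w :=
  LinearMap.map_sub₂ T.bilin u v w

lemma sub_right (u v w : Lp ℝ 2 μ) : T.Q u (v - w) = T.Q u v - T.Q u w :=
  (T.bilin u).map_sub v w

lemma Q_neg_neg (u v : Lp ℝ 2 μ) : T.Q (-u) (-v) = T.Q u v := by
  simp only [← bilin_apply, map_neg, LinearMap.neg_apply, _root_.neg_neg]

lemma sum_right {ι : Type*} (u : Lp ℝ 2 μ) (s : Finset ι) (g : ι → Lp ℝ 2 μ) :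
    T.Q u (∑ i ∈ s, g i) = ∑ i ∈ s, T.Q u (g i) :=
  map_sum (T.bilin u) g s

lemma sum_smul_sum_smul {ι : Type*} [Fintype ι] (a : ι → ℝ) (g : ι → Lp ℝ 2 μ) :
    T.Q (∑ i, a i • g i) (∑ j, a j • g j) = ∑ i, ∑ j, a i * a j * T.Q (g i) (g j) := by
  simp only [← bilin_apply, map_sum, LinearMap.sum_apply, map_smul,
    LinearMap.smul_apply, smul_eq_mul, Finset.mul_sum]
  rw [Finset.sum_comm]
  exact Finset.sum_congr rfl fun i _ => Finset.sum_congr rfl fun j _ => by ring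

lemma Q_add_add (u v : Lp ℝ 2 μ) :
    T.Q (u + v) (u + v) = T.Q u u + 2 * T.Q u v + T.Q v v := by
  rw [T.add_left, T.add_right, T.add_right, T.symm v u]
  ring

lemma Q_sub_sub (u v : Lp ℝ 2 μ) :
    T.Q (u - v) (u - v) = T.Q u u - 2 * T.Q u v + T.Q v v := by
  rw [T.sub_left, T.sub_right, T.sub_right, T.symm v u]
  ring

lemma PosPres.form_nonpos_of_inf_eq_zero {T : WideForm μ} (hpp : T.PosPres)
    {u v : Lp ℝ 2 μ} (hu : u ∈ T.dom) (hv : v ∈ T.dom) (huv : u ⊓ v = 0) : T.Q u v ≤ 0 := by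
  have habs : |u - v| = u + v := by
    rw [abs_sub_comm, ← sup_sub_inf_eq_abs_sub, ← inf_add_sup u v, huv, sup_comm]
    simp
  have h := (hpp (u - v) (T.dom.sub_mem hu hv)).2
  rw [habs, T.Q_add_add, T.Q_sub_sub] at h
  linarith

def formNormSq (u : Lp ℝ 2 μ) : ℝ := T.Q u u + ‖u‖ ^ 2

lemma formNormSq_nonneg (u : Lp ℝ 2 μ) : 0 ≤ T.formNormSq u :=
  add_nonneg (T.nonneg u) (sq_nonneg _)

lemma formNormSq_neg (u : Lp ℝ 2 μ) : T.formNormSq (-u) = T.formNormSq u := by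
  rw [formNormSq, formNormSq, T.Q_neg_neg, norm_neg]

lemma formNormSq_add_le (u v : Lp ℝ 2 μ) :
    T.formNormSq (u + v) ≤ 2 * T.formNormSq u + 2 * T.formNormSq v := by
  have hpar := parallelogram_law_with_norm ℝ u v
  have hQ : T.Q (u + v) (u + v) + T.Q (u - v) (u - v) = 2 * T.Q u u + 2 * T.Q v v := by
    rw [T.Q_add_add, T.Q_sub_sub]; ring
  have := T.formNormSq_nonneg (u - v)
  simp only [formNormSq] at *
  nlinarith

end WideForm

section NestDom

variable {μ : Measure X} {T : WideForm μ} {𝒜 : ℕ → Set X} {B : Set X}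

lemma NestDom.zero_mem : (0 : Lp ℝ 2 μ) ∈ NestDom T 𝒜 B := by
  refine ⟨T.dom.zero_mem, fun _ => 0, fun _ => ⟨T.dom.zero_mem, 0, indMul_zero _⟩, ?_⟩
  simp [← T.bilin_apply]

lemma NestDom.neg_mem {u : Lp ℝ 2 μ} (hu : u ∈ NestDom T 𝒜 B) : -u ∈ NestDom T 𝒜 B := by
  obtain ⟨hu, g, hg, hlim⟩ := hu
  refine ⟨T.dom.neg_mem hu, fun k => -g k, fun k => ⟨T.dom.neg_mem (hg k).1, ?_⟩, ?_⟩
  · obtain ⟨n, hn⟩ := (hg k).2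
    exact ⟨n, by rw [indMul_neg, hn]⟩
  · change Tendsto (fun k => T.formNormSq (g k - u)) atTop (𝓝 0) at hlim
    change Tendsto (fun k => T.formNormSq (-g k - -u)) atTop (𝓝 0)
    simpa only [← neg_sub', T.formNormSq_neg] using hlim

lemma exists_indMul_inter_nest_eq_add (h𝒜 : Monotone 𝒜) {u v : Lp ℝ 2 μ}
    (hu : ∃ n, indMul (B ∩ 𝒜 n) u = u) (hv : ∃ n, indMul (B ∩ 𝒜 n) v = v) :
    ∃ n, indMul (B ∩ 𝒜 n) (u + v) = u + v := by
  obtain ⟨n₁, hn₁⟩ := hu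
  obtain ⟨n₂, hn₂⟩ := hv
  wlog h : n₁ ≤ n₂ generalizing u v n₁ n₂
  · simpa only [add_comm u] using this _ hn₂ _ hn₁ (le_of_not_ge h)
  by_cases hm : MeasurableSet (B ∩ 𝒜 n₂)
  · refine ⟨n₂, ?_⟩
    rw [indMul_add, hn₂,
      indMul_eq_self_of_subset hm (Set.inter_subset_inter_right B (h𝒜 h)) hn₁]
  · refine ⟨n₁, ?_⟩
    rw [← hn₂, indMul_of_not_measurableSet hm, add_zero, hn₁]

lemma NestDom.add_mem (h𝒜 : Monotone 𝒜) {u v : Lp ℝ 2 μ} (hu : u ∈ NestDom T 𝒜 B)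
    (hv : v ∈ NestDom T 𝒜 B) : u + v ∈ NestDom T 𝒜 B := by
  obtain ⟨hu, g, hg, hglim⟩ := hu
  obtain ⟨hv, h, hh, hhlim⟩ := hv
  refine ⟨T.dom.add_mem hu hv, fun k => g k + h k,
    fun k => ⟨T.dom.add_mem (hg k).1 (hh k).1, ?_⟩, ?_⟩
  · exact exists_indMul_inter_nest_eq_add h𝒜 (hg k).2 (hh k).2
  · change Tendsto (fun k => T.formNormSq (g k - u)) atTop (𝓝 0) at hglim
    change Tendsto (fun k => T.formNormSq (h k - v)) atTop (𝓝 0) at hhlim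
    change Tendsto (fun k => T.formNormSq (g k + h k - (u + v))) atTop (𝓝 0)
    have hlim : Tendsto (fun k => 2 * T.formNormSq (g k - u) + 2 * T.formNormSq (h k - v))
        atTop (𝓝 0) := by
      simpa using (hglim.const_mul 2).add (hhlim.const_mul 2)
    refine squeeze_zero (fun k => T.formNormSq_nonneg _) (fun k => ?_) hlim
    rw [add_sub_add_comm]
    exact T.formNormSq_add_le _ _

def NestDom.addSubgroup (T : WideForm μ) (h𝒜 : Monotone 𝒜) (B : Set X) :
    AddSubgroup (Lp ℝ 2 μ) where
  carrier := NestDom T 𝒜 B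
  zero_mem' := NestDom.zero_mem
  add_mem' := NestDom.add_mem h𝒜
  neg_mem' := NestDom.neg_mem

end NestDom

section NestInvariant

variable {μ : Measure X} {T : WideForm μ} {𝒜 : ℕ → Set X} {B C : Set X}

lemma NestInvariant.form_eq_zero (h𝒜 : Monotone 𝒜) (hC : NestInvariant T 𝒜 B C)
    {v w : Lp ℝ 2 μ} (hv : v ∈ NestDom T 𝒜 B) (hw : w ∈ NestDom T 𝒜 B)
    (hCv : indMul C v = v) (hCw : indMul C w = 0) : T.Q v w = 0 := by
  have h := (hC.2 (v + w) (NestDom.add_mem h𝒜 hv hw)).2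
  rw [indMul_add, hCv, hCw, add_zero, add_sub_cancel_left, T.Q_add_add] at h
  linarith

/-- Split `1_D u = 1_D u⁺ - 1_D u⁻`: invariance of `C` makes `1_C u⁺` `Q`-orthogonal to `1_D u⁺`,
and since `u⁺ ⊓ u⁻ = 0` positivity preservation gives `Q(1_C u⁺, 1_D u⁻) ≤ 0`. -/
lemma NestInvariant.form_indMul_nonneg (hpp : T.PosPres) (h𝒜 : Monotone 𝒜)
    (hC : NestInvariant T 𝒜 B C) {u : Lp ℝ 2 μ} (hu : u⁺ ∈ NestDom T 𝒜 B)
    (hCu : indMul C u = indMul C u⁺) {D : Set X} (hD : MeasurableSet D) (hCD : μ (C ∩ D) = 0)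
    (hDp : indMul D u⁺ ∈ NestDom T 𝒜 B) (hDm : indMul D u⁻ ∈ T.dom) :
    0 ≤ T.Q (indMul C u) (indMul D u) := by
  have he : indMul C u⁺ ∈ NestDom T 𝒜 B := (hC.2 _ hu).1
  have hplus : T.Q (indMul C u⁺) (indMul D u⁺) = 0 :=
    hC.form_eq_zero h𝒜 he hDp (by rw [indMul_indMul hC.1 hC.1, Set.inter_self])
      (by rw [indMul_indMul hC.1 hD, indMul_of_measure_zero hCD])
  have hdisj : indMul C u⁺ ⊓ indMul D u⁻ = 0 :=
    le_antisymm
      (posPart_inf_negPart_eq_zero u ▸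
        inf_le_inf (indMul_le_self C (posPart_nonneg u)) (indMul_le_self D (negPart_nonneg u)))
      (le_inf (indMul_nonneg C (posPart_nonneg u)) (indMul_nonneg D (negPart_nonneg u)))
  have hminus : T.Q (indMul C u⁺) (indMul D u⁻) ≤ 0 :=
    hpp.form_nonpos_of_inf_eq_zero he.1 hDm hdisj
  have hsplit : indMul D u = indMul D u⁺ - indMul D u⁻ := by
    rw [← indMul_sub, posPart_sub_negPart]
  rw [hCu, hsplit, T.sub_right, hplus]
  linarith

end NestInvariant

section NodalDomain

variable {μ : Measure X} {T : WideForm μ} {𝒜 : ℕ → Set X} {f : Lp ℝ 2 μ} {C : Set X}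

def IsNodalDomain (T : WideForm μ) (𝒜 : ℕ → Set X) (f : Lp ℝ 2 μ) (C : Set X) : Prop :=
  (NestComponent T 𝒜 {x | 0 < f x} C ∧ μ (C \ {x | 0 < f x}) = 0) ∨
    (NestComponent T 𝒜 {x | f x < 0} C ∧ μ (C \ {x | f x < 0}) = 0)

namespace IsNodalDomain

lemma measurableSet (hC : IsNodalDomain T 𝒜 f C) : MeasurableSet C :=
  hC.elim (·.1.1.1) (·.1.1.1)

lemma indMul_ne_zero (hC : IsNodalDomain T 𝒜 f C) : indMul C f ≠ 0 := by
  rcases hC with ⟨hcomp, hnull⟩ | ⟨hcomp, hnull⟩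
  · exact _root_.indMul_ne_zero hcomp.1.1 hcomp.2.1
      ((ae_le_set.mpr hnull).mono fun _ hx hxC => (hx hxC).ne')
  · exact _root_.indMul_ne_zero hcomp.1.1 hcomp.2.1
      ((ae_le_set.mpr hnull).mono fun _ hx hxC => (hx hxC).ne)

lemma indMul_posPart_mem (hC : IsNodalDomain T 𝒜 f C)
    (hfp : f⁺ ∈ NestDom T 𝒜 {x | 0 < f x}) : indMul C f⁺ ∈ NestDom T 𝒜 {x | 0 < f x} := by
  rcases hC with ⟨hcomp, -⟩ | ⟨-, hnull⟩
  · exact (hcomp.1.2 _ hfp).1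
  · rw [indMul_posPart_eq_zero ((ae_le_set.mpr hnull).mono fun _ hx hxC => (hx hxC).le)]
    exact NestDom.zero_mem

lemma indMul_negPart_mem (hC : IsNodalDomain T 𝒜 f C)
    (hfm : f⁻ ∈ NestDom T 𝒜 {x | f x < 0}) : indMul C f⁻ ∈ NestDom T 𝒜 {x | f x < 0} := by
  rcases hC with ⟨-, hnull⟩ | ⟨hcomp, -⟩
  · rw [indMul_negPart_eq_zero ((ae_le_set.mpr hnull).mono fun _ hx hxC => (hx hxC).le)]
    exact NestDom.zero_mem
  · exact (hcomp.1.2 _ hfm).1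

lemma indMul_mem_dom (hC : IsNodalDomain T 𝒜 f C) (hfp : f⁺ ∈ NestDom T 𝒜 {x | 0 < f x})
    (hfm : f⁻ ∈ NestDom T 𝒜 {x | f x < 0}) : indMul C f ∈ T.dom := by
  rw [← posPart_sub_negPart f, indMul_sub]
  exact T.dom.sub_mem (hC.indMul_posPart_mem hfp).1 (hC.indMul_negPart_mem hfm).1

lemma form_indMul_nonneg (hpp : T.PosPres) (h𝒜 : Monotone 𝒜) (hC : IsNodalDomain T 𝒜 f C)
    (hfp : f⁺ ∈ NestDom T 𝒜 {x | 0 < f x}) (hfm : f⁻ ∈ NestDom T 𝒜 {x | f x < 0})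
    {D : Set X} (hD : MeasurableSet D) (hCD : μ (C ∩ D) = 0)
    (hDp : indMul D f⁺ ∈ NestDom T 𝒜 {x | 0 < f x})
    (hDm : indMul D f⁻ ∈ NestDom T 𝒜 {x | f x < 0}) :
    0 ≤ T.Q (indMul C f) (indMul D f) := by
  rcases hC with ⟨hcomp, hnull⟩ | ⟨hcomp, hnull⟩
  · exact hcomp.1.form_indMul_nonneg hpp h𝒜 hfp
      (indMul_eq_indMul_posPart ((ae_le_set.mpr hnull).mono fun _ hx hxC => (hx hxC).le))
      hD hCD hDp hDm.1
  · have h := hcomp.1.form_indMul_nonneg hpp h𝒜 (u := -f) (by rwa [posPart_neg])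
      (by rw [posPart_neg]
          exact indMul_neg_eq_indMul_negPart
            ((ae_le_set.mpr hnull).mono fun _ hx hxC => (hx hxC).le))
      hD hCD (by rwa [posPart_neg]) (by rw [negPart_neg]; exact hDp.1)
    rwa [indMul_neg, indMul_neg, T.Q_neg_neg] at h

lemma sum_form_le {ι : Type*} [Fintype ι] (hpp : T.PosPres) (h𝒜 : Monotone 𝒜)
    (hfp : f⁺ ∈ NestDom T 𝒜 {x | 0 < f x}) (hfm : f⁻ ∈ NestDom T 𝒜 {x | f x < 0})
    {C : ι → Set X} (hC : ∀ j, IsNodalDomain T 𝒜 f (C j))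
    (hdisj : Pairwise fun i j => μ (C i ∩ C j) = 0) (i : ι) :
    ∑ j, T.Q (indMul (C i) f) (indMul (C j) f) ≤ T.Q (indMul (C i) f) f := by
  have hCm : ∀ j, MeasurableSet (C j) := fun j => (hC j).measurableSet
  have hU : MeasurableSet (⋃ j, C j) := MeasurableSet.iUnion hCm
  have hrest : ∀ {B : Set X} {u : Lp ℝ 2 μ}, u ∈ NestDom T 𝒜 B →
      (∀ j, indMul (C j) u ∈ NestDom T 𝒜 B) → indMul (⋃ j, C j)ᶜ u ∈ NestDom T 𝒜 B := by
    intro B u hu hCu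
    rw [indMul_compl hU, ← sum_indMul_eq_indMul_iUnion hCm hdisj]
    exact (NestDom.addSubgroup T h𝒜 B).sub_mem hu
      ((NestDom.addSubgroup T h𝒜 B).sum_mem fun j _ => hCu j)
  have hCi : μ (C i ∩ (⋃ j, C j)ᶜ) = 0 :=
    measure_mono_null (fun _ hx => hx.2 (Set.mem_iUnion_of_mem i hx.1)) measure_empty
  have h := (hC i).form_indMul_nonneg hpp h𝒜 hfp hfm hU.compl hCi
    (hrest hfp fun j => (hC j).indMul_posPart_mem hfp)
    (hrest hfm fun j => (hC j).indMul_negPart_mem hfm)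
  rw [indMul_compl hU, ← sum_indMul_eq_indMul_iUnion hCm hdisj, T.sub_right, T.sum_right] at h
  linarith

end IsNodalDomain

end NodalDomain

namespace WideForm

variable {μ : Measure X} {T : WideForm μ}

lemma form_sum_smul_le_of_row_sum_le {ι : Type*} [Fintype ι] {g : ι → Lp ℝ 2 μ} {c : ℝ}
    (hgo : Pairwise fun i j => ⟪g i, g j⟫ = 0)
    (hoff : Pairwise fun i j => 0 ≤ T.Q (g i) (g j))
    (hrow : ∀ i, ∑ j, T.Q (g i) (g j) ≤ c * ‖g i‖ ^ 2) (a : ι → ℝ) :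
    T.Q (∑ i, a i • g i) (∑ i, a i • g i) ≤ c * ‖∑ i, a i • g i‖ ^ 2 := by
  rw [T.sum_smul_sum_smul, norm_sum_smul_sq_of_pairwise_inner_eq_zero hgo, Finset.mul_sum]
  calc ∑ i, ∑ j, a i * a j * T.Q (g i) (g j) ≤ ∑ i, a i ^ 2 * ∑ j, T.Q (g i) (g j) :=
        sum_mul_mul_le_of_nonneg_off_diag (fun i j => T.symm _ _) hoff a
    _ ≤ ∑ i, c * (a i ^ 2 * ‖g i‖ ^ 2) :=
        Finset.sum_le_sum fun i _ => by
          nlinarith [mul_le_mul_of_nonneg_left (hrow i) (sq_nonneg (a i))]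

lemma eigenvalue_mul_norm_sq_le_form {lam : ℕ → ℝ} {e : ℕ → Lp ℝ 2 μ} (hmono : Monotone lam)
    (horth : Orthonormal ℝ e) (hbasis : (Submodule.span ℝ (Set.range e)).topologicalClosure = ⊤)
    (heigs : ∀ i, e i ∈ T.dom ∧ ∀ v ∈ T.dom, T.Q (e i) v = lam i * ⟪e i, v⟫)
    {N : ℕ} {v : Lp ℝ 2 μ} (hv : v ∈ T.dom) (hvN : ∀ m < N, ⟪e m, v⟫ = 0) :
    lam N * ‖v‖ ^ 2 ≤ T.Q v v := by
  set c : ℕ → ℝ := fun i => ⟪e i, v⟫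
  have hparseval : HasSum (fun i => c i ^ 2) (‖v‖ ^ 2) := by
    have h := (HilbertBasis.mk horth hbasis.ge).hasSum_inner_mul_inner v v
    rw [HilbertBasis.coe_mk, real_inner_self_eq_norm_sq] at h
    exact h.congr_fun fun i => by rw [real_inner_comm, sq]
  -- `0 ≤ Q(v - w)` for the partial eigen-expansion `w` gives `∑_{i<K} λᵢ cᵢ² ≤ Q(v)`
  refine le_of_tendsto' (hparseval.tendsto_sum_nat.const_mul (lam N)) fun K => ?_
  set w := ∑ i ∈ Finset.range K, c i • e i
  have hw : w ∈ T.dom := T.dom.sum_mem fun i _ => T.dom.smul_mem _ (heigs i).1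
  have hQw : ∀ u ∈ T.dom, T.Q u w = ∑ i ∈ Finset.range K, lam i * c i * ⟪e i, u⟫ := by
    intro u hu
    rw [T.sum_right]
    refine Finset.sum_congr rfl fun i _ => ?_
    rw [← bilin_apply, map_smul, smul_eq_mul, bilin_apply, T.symm, (heigs i).2 u hu]
    ring
  have hew : ∀ i ∈ Finset.range K, ⟪e i, w⟫ = c i := fun i hi => horth.inner_right_sum c hi
  have hvw : T.Q v w = ∑ i ∈ Finset.range K, lam i * c i * c i := hQw v hv
  have hww := hQw w hw
  rw [Finset.sum_congr rfl fun i hi => by rw [hew i hi]] at hww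
  have hQ := T.nonneg (v - w)
  rw [T.Q_sub_sub] at hQ
  have hterm : ∀ i ∈ Finset.range K, lam N * c i ^ 2 ≤ lam i * c i * c i := by
    intro i _
    rcases lt_or_ge i N with hi | hi
    · simp [c, hvN i hi]
    · nlinarith [hmono hi, sq_nonneg (c i)]
  rw [Finset.mul_sum]
  have := Finset.sum_le_sum hterm
  linarith

lemma card_le_of_form_row_sum_le {lam : ℕ → ℝ} {e : ℕ → Lp ℝ 2 μ} (hmono : Monotone lam)
    (horth : Orthonormal ℝ e) (hbasis : (Submodule.span ℝ (Set.range e)).topologicalClosure = ⊤)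
    (heigs : ∀ i, e i ∈ T.dom ∧ ∀ v ∈ T.dom, T.Q (e i) v = lam i * ⟪e i, v⟫)
    {N : ℕ} {c : ℝ} (hc : c < lam N) {ι : Type*} [Fintype ι] (g : ι → Lp ℝ 2 μ)
    (hg : ∀ i, g i ∈ T.dom) (hg0 : ∀ i, g i ≠ 0) (hgo : Pairwise fun i j => ⟪g i, g j⟫ = 0)
    (hoff : Pairwise fun i j => 0 ≤ T.Q (g i) (g j))
    (hrow : ∀ i, ∑ j, T.Q (g i) (g j) ≤ c * ‖g i‖ ^ 2) : Fintype.card ι ≤ N := by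
  by_contra! hN
  obtain ⟨a, ha, hperp⟩ := exists_ne_zero_forall_inner_sum_smul_eq_zero
    (by simpa using hN) g (fun m : Fin N => e m)
  set v := ∑ i, a i • g i
  have hv : v ∈ T.dom := T.dom.sum_mem fun i _ => T.dom.smul_mem _ (hg i)
  have hpos : 0 < ‖v‖ ^ 2 := by
    obtain ⟨i, hi⟩ := Function.ne_iff.mp ha
    rw [norm_sum_smul_sq_of_pairwise_inner_eq_zero hgo]
    exact Finset.sum_pos' (fun j _ => by positivity) ⟨i, Finset.mem_univ _,
      mul_pos (sq_pos_of_ne_zero hi) (sq_pos_of_pos (norm_pos_iff.mpr (hg0 i)))⟩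
  have hupper := form_sum_smul_le_of_row_sum_le hgo hoff hrow a
  have hlower := eigenvalue_mul_norm_sq_le_form hmono horth hbasis heigs hv
    (N := N) fun m hm => by rw [real_inner_comm]; exact hperp ⟨m, hm⟩
  nlinarith

end WideForm

theorem courant_nodal_domain_theorem_general {μ : Measure X} (T : WideForm μ)
    (hpp : T.PosPres)
    (lam : ℕ → ℝ) (ef : ℕ → Lp ℝ 2 μ)
    (hmono : ∀ i j, 1 ≤ i → i ≤ j → lam i ≤ lam j)
    (horth : Orthonormal ℝ (fun i : ℕ => ef (i + 1)))
    (hbasis : (Submodule.span ℝ (Set.range fun i : ℕ => ef (i + 1))).topologicalClosure = ⊤)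
    (heigs : ∀ i, 1 ≤ i → ef i ∈ T.dom ∧ ∀ v ∈ T.dom, T.Q (ef i) v = lam i * ⟪ef i, v⟫)
    (n k : ℕ)
    (hmult : ∃ a, 1 ≤ a ∧ a ≤ n ∧ n < a + k ∧
      ∀ i, 1 ≤ i → (lam i = lam n ↔ a ≤ i ∧ i < a + k))
    (f : Lp ℝ 2 μ)
    (heig : ∀ v ∈ T.dom, T.Q f v = lam n * ⟪f, v⟫)
    (𝒜 : ℕ → Set X) (hmonoA : Monotone 𝒜)
    (hfp : f ⊔ 0 ∈ NestDom T 𝒜 {x | 0 < (f : X → ℝ) x})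
    (hfm : (-f) ⊔ 0 ∈ NestDom T 𝒜 {x | (f : X → ℝ) x < 0})
    (l : ℕ) (C : Fin l → Set X)
    (hC : ∀ i,
      (NestComponent T 𝒜 {x | 0 < (f : X → ℝ) x} (C i) ∧
        μ (C i \ {x | 0 < (f : X → ℝ) x}) = 0) ∨
      (NestComponent T 𝒜 {x | (f : X → ℝ) x < 0} (C i) ∧
        μ (C i \ {x | (f : X → ℝ) x < 0}) = 0))
    (hdisj : ∀ i j, i ≠ j → μ (C i ∩ C j) = 0) :
    l ≤ n + k - 1 := by
  obtain ⟨a, ha, han, hnak, hiff⟩ := hmult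
  -- `λ_{a+k}` is the first eigenvalue above the cluster `λ_a = ⋯ = λ_{a+k-1}` containing `λₙ`
  have hgap : lam n < lam (n + k - 1 + 1) := by
    have hne : lam (a + k) ≠ lam n := fun h => by have := (hiff (a + k) (by omega)).mp h; omega
    exact (lt_of_le_of_ne (hmono n (a + k) (by omega) (by omega)) hne.symm).trans_le
      (hmono _ _ (by omega) (by omega))
  have hnodal : ∀ i, IsNodalDomain T 𝒜 f (C i) := hC
  have hCm : ∀ i, MeasurableSet (C i) := fun i => (hnodal i).measurableSet
  have hdom : ∀ i, indMul (C i) f ∈ T.dom := fun i => (hnodal i).indMul_mem_dom hfp hfm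
  simpa using WideForm.card_le_of_form_row_sum_le (lam := fun i => lam (i + 1))
    (fun i j hij => hmono _ _ (by omega) (by omega)) horth hbasis
    (fun i => heigs (i + 1) (by omega)) hgap (fun i => indMul (C i) f) hdom
    (fun i => (hnodal i).indMul_ne_zero)
    (fun i j hij => inner_indMul_eq_zero (hCm i) (hCm j) (hdisj i j hij) f f)
    (fun i j hij => (hnodal i).form_indMul_nonneg hpp hmonoA hfp hfm (hCm j) (hdisj i j hij)
      ((hnodal j).indMul_posPart_mem hfp) ((hnodal j).indMul_negPart_mem hfm))
    fun i => calc
      _ ≤ T.Q (indMul (C i) f) f :=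
        IsNodalDomain.sum_form_le hpp hmonoA hfp hfm hnodal hdisj i
      _ = lam n * ‖indMul (C i) f‖ ^ 2 := by
        rw [T.symm, heig _ (hdom i), real_inner_comm, inner_indMul_self (hCm i)]

/-- Courant nodal domain theorem for positivity preserving forms:
an eigenfunction for the `n`-th eigenvalue `λₙ` (counted with multiplicity, indexed from
`1`) of multiplicity `k`, whose positive and negative parts lie in the nest-restricted
domains, has at most `n + k - 1` `(Q,𝒜)`-nodal domains. -/
theorem courant_nodal_domain_theorem {μ : Measure X} (T : WideForm μ)
    (hpp : T.PosPres) (hdense : Dense (T.dom : Set (Lp ℝ 2 μ)))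
    (G : ℝ → Lp ℝ 2 μ →L[ℝ] Lp ℝ 2 μ) (hG : T.IsResolvent G)
    (hcpt : ∀ α > 0, IsCompactOperator (G α))
    (lam : ℕ → ℝ) (ef : ℕ → Lp ℝ 2 μ)
    (hmono : ∀ i j, 1 ≤ i → i ≤ j → lam i ≤ lam j)
    (horth : Orthonormal ℝ (fun i : ℕ => ef (i + 1)))
    (hbasis : (Submodule.span ℝ (Set.range fun i : ℕ => ef (i + 1))).topologicalClosure = ⊤)
    (heigs : ∀ i, 1 ≤ i → ef i ∈ T.dom ∧ ∀ v ∈ T.dom, T.Q (ef i) v = lam i * ⟪ef i, v⟫)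
    (n k : ℕ) (hn : 1 ≤ n) (hk : 1 ≤ k)
    (hmult : ∃ a, 1 ≤ a ∧ a ≤ n ∧ n < a + k ∧
      ∀ i, 1 ≤ i → (lam i = lam n ↔ a ≤ i ∧ i < a + k))
    (f : Lp ℝ 2 μ) (hf : f ∈ T.dom) (hf0 : f ≠ 0)
    (heig : ∀ v ∈ T.dom, T.Q f v = lam n * ⟪f, v⟫)
    (𝒜 : ℕ → Set X) (hmonoA : Monotone 𝒜) (hmeas : ∀ m, MeasurableSet (𝒜 m))
    (hfp : f ⊔ 0 ∈ NestDom T 𝒜 {x | 0 < (f : X → ℝ) x})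
    (hfm : (-f) ⊔ 0 ∈ NestDom T 𝒜 {x | (f : X → ℝ) x < 0})
    (l : ℕ) (C : Fin l → Set X)
    (hC : ∀ i,
      (NestComponent T 𝒜 {x | 0 < (f : X → ℝ) x} (C i) ∧
        μ (C i \ {x | 0 < (f : X → ℝ) x}) = 0) ∨
      (NestComponent T 𝒜 {x | (f : X → ℝ) x < 0} (C i) ∧
        μ (C i \ {x | (f : X → ℝ) x < 0}) = 0))
    (hdisj : ∀ i j, i ≠ j → μ (C i ∩ C j) = 0) :
    l ≤ n + k - 1 :=
  courant_nodal_domain_theorem_general T hpp lam ef hmono horth hbasis heigs n k hmult f heig 𝒜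
    hmonoA hfp hfm l C hC hdisj
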